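/- Let c ∈ ℂ and R = ℂ[t, t^{-1}, u | u² = t⁴ − 2ct² + 1]. Let (P_{−3,k})_{k ≥ −4} be the sequence of complex numbers determined by the initial values P_{−3,−4} = 0, P_{−3,−3} = 1, P_{−3,−2} = 0, P_{−3,−1} = 0 and the recursion (6+2k)P_{−3,k} = 4kc·P_{−3,k−2} − 2(k−3)·P_{−3,k−4} for k ≥ 0. Then for every odd integer k ≥ 1, in Ω¹_R/dR one has (class of t^k u dt) = P_{−3,k}·(ω_{−3} + c ω_{−1}). -/

import Mathlib

noncomputable section
open Polynomial LaurentPolynomial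

/-- The ring `R = ℂ[t,t⁻¹][u]/(u² − (t⁴ − 2ct² + 1))`, realized by adjoining a root `u`
of `X² − (t⁴ − 2ct² + 1)` to the ring of Laurent polynomials `ℂ[t,t⁻¹]`. -/
abbrev DJKM (c : ℂ) : Type :=
  AdjoinRoot ((X : Polynomial (LaurentPolynomial ℂ)) ^ 2 -
    Polynomial.C (T 4 - 2 * LaurentPolynomial.C c * T 2 + 1))

/-- The element `t^i` of `R`, for `i : ℤ`. -/
def tp (c : ℂ) (i : ℤ) : DJKM c := AdjoinRoot.of _ (T i)

/-- The element `u` of `R`. -/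
def uu (c : ℂ) : DJKM c := AdjoinRoot.root _

/-- The subspace `dR ⊆ Ω¹_R` of exact differentials. -/
def dR (c : ℂ) : Submodule ℂ (KaehlerDifferential ℂ (DJKM c)) :=
  LinearMap.range (KaehlerDifferential.D ℂ (DJKM c)).toLinearMap

/-- The class of `f·dg` in `Ω¹_R/dR`. -/
def cls (c : ℂ) (f g : DJKM c) : KaehlerDifferential ℂ (DJKM c) ⧸ dR c :=
  Submodule.Quotient.mk (f • KaehlerDifferential.D ℂ (DJKM c) g)

/-- `ω_k` : the class of `t^k·u·dt` in `Ω¹_R/dR`. -/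
def w (c : ℂ) (k : ℤ) : KaehlerDifferential ℂ (DJKM c) ⧸ dR c :=
  cls c (tp c k * uu c) (tp c 1)

/-- `ω₀` : the class of `t⁻¹·dt` in `Ω¹_R/dR`. -/
def w0 (c : ℂ) : KaehlerDifferential ℂ (DJKM c) ⧸ dR c :=
  cls c (tp c (-1)) (tp c 1)

/-!
In `Ω¹_R/dR` every `d(tᵐu)` vanishes, so `tᵐ du ≡ -m tᵐ⁻¹u dt`. Computing the class of
`tᵐu d(u²)` once as `2 tᵐu² du`, with `u² = t⁴ - 2ct² + 1`, and once as `tᵐu (4t³ - 4ct) dt`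
gives `(2k + 6) ω_k = 4kc ω_{k-2} - 2(k - 3) ω_{k-4}`, the recursion defining `P_{-3,k}`.
So `x_k = ω_k - P_{-3,k} (ω₋₃ + c ω₋₁)` satisfies it too. The initial values give `x₁ = 0`,
then `x₃ = 0` because the factor `k - 3` kills `x₋₁`, and induction gives `x_k = 0` for all
odd `k ≥ 1`.
-/

theorem Derivation.map_of_map_add_eq_mul {R A M : Type*} [CommRing R] [CommRing A] [Algebra R A]
    [AddCommGroup M] [Module A M] [Module R M] (D : Derivation R A M) {e : ℤ → A}
    (he : ∀ i j, e (i + j) = e i * e j) (he0 : e 0 = 1) (n : ℤ) :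
    D (e n) = n • e (n - 1) • D (e 1) := by
  have add : ∀ a b, D (e a) = a • e (a - 1) • D (e 1) → D (e b) = b • e (b - 1) • D (e 1) →
      D (e (a + b)) = (a + b) • e (a + b - 1) • D (e 1) := by
    intro a b ha hb
    have hab : e a * e (b - 1) = e (a + b - 1) := by rw [← he]; ring_nf
    have hba : e b * e (a - 1) = e (a + b - 1) := by rw [← he]; ring_nf
    rw [he, D.leibniz, ha, hb, smul_comm (e a), smul_comm (e b), smul_smul, smul_smul, hab, hba,
      add_smul, add_comm]
  have neg_one : D (e (-1)) = (-1 : ℤ) • e (-1 - 1) • D (e 1) := by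
    have inv : e (-1) * e 1 = 1 := by rw [← he, ← he0]; rfl
    rw [D.leibniz_of_mul_eq_one inv, sq, ← he, neg_one_smul, neg_smul]
    rfl
  induction n using Int.induction_on with
  | zero => simp [he0]
  | succ n ih => exact add n 1 ih (by simp [he0])
  | pred n ih => exact add (-n) (-1) ih neg_one

theorem eq_zero_of_odd_of_recurrence {K V : Type*} [Field K] [CharZero K] [AddCommGroup V]
    [Module K V] (c : K) {x : ℤ → V}
    (hrec : ∀ k : ℤ, 1 ≤ k →
      ((6 : K) + 2 * k) • x k = (4 * k * c) • x (k - 2) - (2 * ((k : K) - 3)) • x (k - 4))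
    (hinit : c • x (-1) + x (-3) = 0) {k : ℤ} (hk : 1 ≤ k) (hodd : Odd k) : x k = 0 := by
  have step : ∀ k : ℤ, 1 ≤ k →
      (4 * k * c) • x (k - 2) - (2 * ((k : K) - 3)) • x (k - 4) = 0 → x k = 0 := by
    intro k hk h
    have hne : (6 : K) + 2 * k ≠ 0 := by exact_mod_cast (by omega : (6 + 2 * k : ℤ) ≠ 0)
    rw [← hrec k hk, smul_eq_zero] at h
    exact h.resolve_left hne
  have x_one : x 1 = 0 := step 1 le_rfl (by norm_num; linear_combination (norm := module) 4 • hinit)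
  have pairs : ∀ n : ℕ, x (2 * n + 1) = 0 ∧ x (2 * n + 3) = 0 := by
    intro n
    induction n with
    | zero => exact ⟨x_one, step 3 (by norm_num) (by norm_num [x_one])⟩
    | succ n ih =>
      rw [show 2 * ((n + 1 : ℕ) : ℤ) + 1 = 2 * n + 3 by push_cast; ring,
        show 2 * ((n + 1 : ℕ) : ℤ) + 3 = 2 * n + 5 by push_cast; ring]
      refine ⟨ih.2, step (2 * n + 5) (by omega) ?_⟩
      rw [show 2 * (n : ℤ) + 5 - 2 = 2 * n + 3 by ring, show 2 * (n : ℤ) + 5 - 4 = 2 * n + 1 by ring,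
        ih.1, ih.2, smul_zero, smul_zero, sub_zero]
  obtain ⟨n, rfl⟩ := hodd
  lift n to ℕ using (by omega)
  exact (pairs n).1

section Differentials

variable (c : ℂ)

local notation "d" => KaehlerDifferential.D ℂ (DJKM c)
local notation "π" => Submodule.mkQ (dR c)

theorem tp_add (i j : ℤ) : tp c (i + j) = tp c i * tp c j := by
  rw [tp, tp, tp, T_add, map_mul]

theorem tp_zero : tp c 0 = 1 := by
  rw [tp, T_zero, map_one]

theorem uu_sq : uu c ^ 2 = tp c 4 - (2 * c) • tp c 2 + 1 := by
  have h := AdjoinRoot.mk_self (f := (X : Polynomial (LaurentPolynomial ℂ)) ^ 2 -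
    Polynomial.C (T 4 - 2 * LaurentPolynomial.C c * T 2 + 1))
  rw [map_sub, map_pow, AdjoinRoot.mk_C, sub_eq_zero] at h
  rw [uu, ← AdjoinRoot.mk_X, h, tp, tp, Algebra.smul_def, IsScalarTower.algebraMap_apply ℂ ℂ[T;T⁻¹]]
  simp [AdjoinRoot.algebraMap_eq, map_ofNat]

theorem d_tp (n : ℤ) : d (tp c n) = n • tp c (n - 1) • d (tp c 1) :=
  (d).map_of_map_add_eq_mul (tp_add c) (tp_zero c) n

theorem mkQ_d (f : DJKM c) : π (d f) = 0 :=
  (Submodule.Quotient.mk_eq_zero _).mpr ⟨f, rfl⟩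

theorem tp_mul_uu_smul_tp_smul (m j : ℤ) (x : KaehlerDifferential ℂ (DJKM c)) :
    (tp c m * uu c) • tp c j • x = (tp c (m + j) * uu c) • x := by
  rw [smul_smul, tp_add]; ring_nf

theorem mkQ_tp_mul_uu_smul_d_tp (m : ℤ) : π ((tp c m * uu c) • d (tp c 1)) = w c m := rfl

theorem mkQ_tp_smul_d_uu (m : ℤ) : π (tp c m • d (uu c)) = -(m • w c (m - 1)) := by
  have e : uu c • d (tp c m) = m • (tp c (m - 1) * uu c) • d (tp c 1) := by
    rw [d_tp, smul_comm, smul_smul, mul_comm (uu c)]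
  have h := mkQ_d c (tp c m * uu c)
  rw [Derivation.leibniz, e] at h
  simp only [map_add, map_zsmul] at h
  exact eq_neg_of_add_eq_zero_left h

theorem mkQ_tp_mul_uu_smul_d_uu_sq (m : ℤ) :
    π ((tp c m * uu c) • d (uu c ^ 2)) =
      (-2 * ((m : ℂ) + 4)) • w c (m + 3) + (4 * c * ((m : ℂ) + 2)) • w c (m + 1) -
        (2 * (m : ℂ)) • w c (m - 1) := by
  have e : (tp c m * uu c) • d (uu c ^ 2) =
      (2 : ℕ) • (tp c (m + 4) • d (uu c) - (2 * c) • tp c (m + 2) • d (uu c) + tp c m • d (uu c)) := by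
    rw [Derivation.leibniz_pow, smul_comm, smul_smul, mul_assoc (tp c m), pow_one, ← sq, uu_sq]
    simp only [mul_add, mul_sub, ← tp_add, mul_smul_comm, mul_one, add_smul, sub_smul, smul_assoc]
  rw [e]
  simp only [map_nsmul, map_add, map_sub, map_smul, mkQ_tp_smul_d_uu]
  rw [show m + 4 - 1 = m + 3 by ring, show m + 2 - 1 = m + 1 by ring]
  module

theorem mkQ_tp_mul_uu_smul_d_uu_sq' (m : ℤ) :
    π ((tp c m * uu c) • d (uu c ^ 2)) = (4 : ℂ) • w c (m + 3) - (4 * c) • w c (m + 1) := by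
  rw [uu_sq]
  simp only [map_add, map_sub, Derivation.map_smul, Derivation.map_one_eq_zero, add_zero, smul_sub]
  rw [d_tp c 4, d_tp c 2, smul_comm _ (4 : ℤ), smul_comm _ (2 * c), smul_comm _ (2 : ℤ),
    tp_mul_uu_smul_tp_smul, tp_mul_uu_smul_tp_smul]
  simp only [map_zsmul, map_smul, mkQ_tp_mul_uu_smul_d_tp]
  norm_num
  module

theorem w_recurrence (k : ℤ) :
    ((6 : ℂ) + 2 * k) • w c k = (4 * k * c) • w c (k - 2) - (2 * ((k : ℂ) - 3)) • w c (k - 4) := by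
  have h := (mkQ_tp_mul_uu_smul_d_uu_sq c (k - 3)).symm.trans
    (mkQ_tp_mul_uu_smul_d_uu_sq' c (k - 3))
  rw [show k - 3 + 3 = k by ring, show k - 3 + 1 = k - 2 by ring,
    show k - 3 - 1 = k - 4 by ring] at h
  push_cast at h
  linear_combination (norm := module) -h

end Differentials

theorem stmt8_general (c : ℂ) (P : ℤ → ℂ)
    (h3 : P (-3) = 1) (h1 : P (-1) = 0)
    (hrec : ∀ k : ℤ, 0 ≤ k →
      ((6 : ℂ) + 2 * (k : ℂ)) * P k = 4 * (k : ℂ) * c * P (k - 2) - 2 * ((k : ℂ) - 3) * P (k - 4)) :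
    ∀ k : ℤ, 1 ≤ k → Odd k → w c k = P k • (w c (-3) + c • w c (-1)) := by
  intro k hk hodd
  set v := w c (-3) + c • w c (-1) with hv
  rw [← sub_eq_zero]
  refine eq_zero_of_odd_of_recurrence c (x := fun k ↦ w c k - P k • v) (fun k hk ↦ ?_) ?_ hk hodd
  · linear_combination (norm := module) w_recurrence c k - hrec k (by omega) • v
  · simp only [h1, h3, hv]
    module

/-- For odd `k ≥ 1`, the class of `t^k u dt` equals `P_{−3,k}·(ω₋₃ + c·ω₋₁)`. -/
theorem stmt8 (c : ℂ) (P : ℤ → ℂ)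
    (h4 : P (-4) = 0) (h3 : P (-3) = 1) (h2 : P (-2) = 0) (h1 : P (-1) = 0)
    (hrec : ∀ k : ℤ, 0 ≤ k →
      ((6 : ℂ) + 2 * (k : ℂ)) * P k = 4 * (k : ℂ) * c * P (k - 2) - 2 * ((k : ℂ) - 3) * P (k - 4)) :
    ∀ k : ℤ, 1 ≤ k → Odd k → w c k = P k • (w c (-3) + c • w c (-1)) :=
  stmt8_general c P h3 h1 hrec
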